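/- arXiv:1904.01511 — 2 statements merged into one kernel-verified Lean document; each statement's English description precedes it below -/
import Mathlib

section
/- Let k ≥ 2 and let Δ ⊂ ℝ^k be a full-dimensional lattice polytope. Let v ∈ ℤ^k be a primitive vector with lw(Δ) = lw_v(Δ) =: m, and suppose: (1) the hyperplane {⟨x,v⟩ = min(Δ,v)} intersects Δ exactly in one vertex p_min, and the hyperplane {⟨x,v⟩ = max(Δ,v)} intersects Δ exactly in one vertex p_max; (2) the affine span Λ of the set of lattice points of Δ lying on the hyperplane {⟨x,v⟩ = min(Δ,v)+1} has dimension ≤ k−2; (3) the line through p_min and p_max does not intersect Λ. Then there exists a polynomial F ∈ ℚ[x₁,…,x_k] of total degree m whose degree-m homogeneous component equals (⟨x,v⟩)^m = (v₁x₁+⋯+v_kx_k)^m and which vanishes at every point of Δ ∩ ℤ^k. -/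
open MvPolynomial

/-- The canonical embedding of `ℤ^k` into `ℝ^k`. -/
def castR {k : ℕ} (p : Fin k → ℤ) : Fin k → ℝ := fun i => (p i : ℝ)

/-- `min(Δ,v) = min_{x ∈ Δ} ⟨x,v⟩`. -/
noncomputable def minv (k : ℕ) (Δ : Set (Fin k → ℝ)) (v : Fin k → ℤ) : ℝ :=
  sInf ((fun x : Fin k → ℝ => ∑ i, x i * (v i : ℝ)) '' Δ)

/-- `max(Δ,v) = max_{x ∈ Δ} ⟨x,v⟩`. -/
noncomputable def maxv (k : ℕ) (Δ : Set (Fin k → ℝ)) (v : Fin k → ℤ) : ℝ :=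
  sSup ((fun x : Fin k → ℝ => ∑ i, x i * (v i : ℝ)) '' Δ)

/-- The lattice width of `Δ` in the direction `v`. -/
noncomputable def lwv (k : ℕ) (Δ : Set (Fin k → ℝ)) (v : Fin k → ℤ) : ℝ :=
  maxv k Δ v - minv k Δ v

/-- The lattice width of `Δ`: the minimum of `lw_v(Δ)` over nonzero `v ∈ ℤ^k`. -/
noncomputable def lw (k : ℕ) (Δ : Set (Fin k → ℝ)) : ℝ :=
  sInf {w : ℝ | ∃ v : Fin k → ℤ, v ≠ 0 ∧ w = lwv k Δ v}

/-- `Λ`: the affine span of the lattice points of `Δ` lying on the hyperplane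
`⟨x,v⟩ = min(Δ,v) + 1`. -/
noncomputable def Lambda (k : ℕ) (Δ : Set (Fin k → ℝ)) (v : Fin k → ℤ) :
    AffineSubspace ℝ (Fin k → ℝ) :=
  affineSpan ℝ (castR '' {p : Fin k → ℤ |
    castR p ∈ Δ ∧ ∑ i, (p i : ℝ) * (v i : ℝ) = minv k Δ v + 1})

/-!
Let `n = min(Δ,v)`. Every lattice point of `Δ` lies on one of the hyperplanes `⟨x,v⟩ = n + j`,
`0 ≤ j ≤ m`, and the two extreme ones meet `Δ` only in the lattice vertices `p_min`, `p_max`.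
The point of the line `p_min p_max` at level `n + 1` would lie in `Λ` as soon as `p_min` lay in
the affine span of `Λ ∪ {p_max}`. By (3) it does not, a fortiori not in the `ℚ`-affine span of
the lattice points involved, so some affine function `g` with rational coefficients vanishes on
the lattice points of level `n + 1` and at `p_max`, and takes the value `-m` at `p_min`.
With `u = ⟨x,v⟩ - n`, the polynomial `F = (u - 2) ⋯ (u - (m - 1)) · ((u - 1)(u - m) + g)`
vanishes on the levels `2, …, m - 1` through its first factor and on the levels `0`, `1`, `m`
through its second one, and since `deg g ≤ 1` its leading form is `⟨x,v⟩^m`.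
-/

namespace MvPolynomial

variable {σ R : Type*} [CommRing R]

theorem homogeneousComponent_mul_of_totalDegree_le {p q : MvPolynomial σ R} {a b : ℕ}
    (hp : p.totalDegree ≤ a) (hq : q.totalDegree ≤ b) :
    homogeneousComponent (a + b) (p * q) = homogeneousComponent a p * homogeneousComponent b q := by
  classical
  have hsum (r : MvPolynomial σ R) {d : ℕ} (hr : r.totalDegree ≤ d) :
      ∑ i ∈ Finset.range (d + 1), homogeneousComponent i r = r := by
    rw [← Finset.sum_subset (Finset.range_subset_range.2 (Nat.succ_le_succ hr)),
      sum_homogeneousComponent]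
    intro i _ hi
    exact homogeneousComponent_eq_zero _ _ (by simp at hi; omega)
  have hmul (i j : ℕ) : homogeneousComponent (a + b)
      (homogeneousComponent i p * homogeneousComponent j q) =
        if a + b = i + j then homogeneousComponent i p * homogeneousComponent j q else 0 :=
    homogeneousComponent_of_mem
      ((homogeneousComponent_isHomogeneous i p).mul (homogeneousComponent_isHomogeneous j q))
  conv_lhs => rw [← hsum p hp, ← hsum q hq, Finset.sum_mul_sum, map_sum]
  rw [Finset.sum_eq_single_of_mem a (by simp), map_sum, Finset.sum_eq_single_of_mem b (by simp)]
  · rw [hmul, if_pos rfl]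
  · intro j hj hjb
    rw [hmul, if_neg (by simp at hj; omega)]
  · intro i hi hia
    rw [map_sum]
    refine Finset.sum_eq_zero fun j hj => ?_
    rw [hmul, if_neg (by simp at hi hj; omega)]

theorem homogeneousComponent_prod_of_totalDegree_le {ι : Type*} (s : Finset ι)
    {f : ι → MvPolynomial σ R} {d : ι → ℕ} (hf : ∀ i ∈ s, (f i).totalDegree ≤ d i) :
    homogeneousComponent (∑ i ∈ s, d i) (∏ i ∈ s, f i) =
      ∏ i ∈ s, homogeneousComponent (d i) (f i) := by
  induction s using Finset.cons_induction with
  | empty => simp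
  | cons a s ha ih =>
    rw [Finset.forall_mem_cons] at hf
    rw [Finset.sum_cons, Finset.prod_cons, Finset.prod_cons, ← ih hf.2,
      homogeneousComponent_mul_of_totalDegree_le hf.1]
    exact (totalDegree_finsetProd _ _).trans (Finset.sum_le_sum hf.2)

theorem totalDegree_eq_of_homogeneousComponent_ne_zero {p : MvPolynomial σ R} {n : ℕ}
    (hp : p.totalDegree ≤ n) (hn : homogeneousComponent n p ≠ 0) : p.totalDegree = n :=
  hp.antisymm (not_lt.1 fun hlt => hn (homogeneousComponent_eq_zero n p hlt))

theorem totalDegree_sub_natCast_le (p : MvPolynomial σ R) (j : ℕ) :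
    (p - (j : MvPolynomial σ R)).totalDegree ≤ p.totalDegree := by
  simpa using totalDegree_sub_C_le p (j : R)

theorem homogeneousComponent_sub_natCast {n : ℕ} (hn : n ≠ 0) (p : MvPolynomial σ R) (j : ℕ) :
    homogeneousComponent n (p - (j : MvPolynomial σ R)) = homogeneousComponent n p := by
  rw [map_sub, homogeneousComponent_eq_zero _ (j : MvPolynomial σ R)
    (by rw [← map_natCast C, totalDegree_C]; omega), sub_zero]

theorem sum_C_mul_X_ne_zero [Fintype σ] [Nontrivial R] {a : σ → R} (ha : a ≠ 0) :
    ∑ i, C (a i) * X i ≠ 0 := by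
  classical
  obtain ⟨i, hi⟩ := Function.ne_iff.1 ha
  exact fun h => hi (by simpa [Pi.single_apply] using congrArg (eval (Pi.single i 1)) h)

end MvPolynomial

section WidthPoly

open Finset

variable {R : Type*} [CommRing R]

def widthPoly (m : ℕ) (u g : R) : R :=
  (∏ j ∈ Ico 2 m, (u - j)) * ((u - 1) * (u - m) + g)

theorem map_widthPoly {S : Type*} [CommRing S] (φ : R →+* S) (m : ℕ) (u g : R) :
    φ (widthPoly m u g) = widthPoly m (φ u) (φ g) := by
  simp [widthPoly, map_prod]

theorem widthPoly_natCast_eq_zero {m L : ℕ} (hL : L ≤ m) {g : R}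
    (h₀ : L = 0 → g = -m) (h₁ : L = 1 → g = 0) (h_top : L = m → g = 0) :
    widthPoly m (L : R) g = 0 := by
  rcases Nat.lt_or_ge L 2 with hL2 | hL2
  · rcases (show L = 0 ∨ L = 1 by omega) with rfl | rfl <;> simp [widthPoly, *]
  rcases hL.lt_or_eq with hLm | rfl
  · exact mul_eq_zero_of_left (prod_eq_zero (mem_Ico.2 ⟨hL2, hLm⟩) (sub_self _)) _
  · simp [widthPoly, h_top]

variable {σ : Type*} {u g : MvPolynomial σ R}

theorem totalDegree_prod_sub_natCast_le (hu : u.totalDegree ≤ 1) (s : Finset ℕ) :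
    (∏ j ∈ s, (u - (j : MvPolynomial σ R))).totalDegree ≤ #s := by
  refine (totalDegree_finsetProd _ _).trans ?_
  simpa using sum_le_sum fun j (_ : j ∈ s) => (totalDegree_sub_natCast_le u j).trans hu

theorem totalDegree_widthPoly_quadratic_le (hu : u.totalDegree ≤ 1) (hg : g.totalDegree ≤ 1)
    (m : ℕ) : ((u - 1) * (u - (m : MvPolynomial σ R)) + g).totalDegree ≤ 2 := by
  refine (totalDegree_add _ _).trans
    (max_le ((totalDegree_mul _ _).trans ?_) (hg.trans one_le_two))
  have h₁ := (totalDegree_sub_natCast_le u 1).trans hu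
  have hm := (totalDegree_sub_natCast_le u m).trans hu
  rw [Nat.cast_one] at h₁
  omega

theorem totalDegree_widthPoly_le {m : ℕ} (hm : 2 ≤ m) (hu : u.totalDegree ≤ 1)
    (hg : g.totalDegree ≤ 1) : (widthPoly m u g).totalDegree ≤ m := by
  refine (totalDegree_mul _ _).trans ?_
  have hprod := totalDegree_prod_sub_natCast_le hu (Ico 2 m)
  have hquad := totalDegree_widthPoly_quadratic_le hu hg m
  rw [Nat.card_Ico] at hprod
  omega

theorem homogeneousComponent_widthPoly {m : ℕ} (hm : 2 ≤ m) (hu : u.totalDegree ≤ 1)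
    (hg : g.totalDegree ≤ 1) :
    homogeneousComponent m (widthPoly m u g) = homogeneousComponent 1 u ^ m := by
  have hprod : homogeneousComponent (m - 2) (∏ j ∈ Ico 2 m, (u - (j : MvPolynomial σ R))) =
      homogeneousComponent 1 u ^ (m - 2) := by
    simpa [homogeneousComponent_sub_natCast one_ne_zero] using
      homogeneousComponent_prod_of_totalDegree_le (Ico 2 m) (d := fun _ => 1)
        fun j _ => (totalDegree_sub_natCast_le u j).trans hu
  have hquad : homogeneousComponent 2 ((u - 1) * (u - (m : MvPolynomial σ R)) + g) =
      homogeneousComponent 1 u ^ 2 := by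
    have h₁ : u - 1 = u - ((1 : ℕ) : MvPolynomial σ R) := by rw [Nat.cast_one]
    rw [map_add, homogeneousComponent_eq_zero 2 g (by omega), add_zero, sq, h₁,
      homogeneousComponent_mul_of_totalDegree_le (a := 1) (b := 1)
        ((totalDegree_sub_natCast_le u 1).trans hu) ((totalDegree_sub_natCast_le u m).trans hu),
      homogeneousComponent_sub_natCast one_ne_zero, homogeneousComponent_sub_natCast one_ne_zero]
  have := homogeneousComponent_mul_of_totalDegree_le
    (by simpa using totalDegree_prod_sub_natCast_le hu (Ico 2 m))
    (totalDegree_widthPoly_quadratic_le hu hg m)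
  rwa [Nat.sub_add_cancel hm, hprod, hquad, ← pow_add, Nat.sub_add_cancel hm] at this

end WidthPoly

section AffineSeparation

open AffineMap

variable {K V : Type*} [Field K] [AddCommGroup V] [Module K V] (ℓ : V →ₗ[K] K)

theorem LinearMap.eq_of_mem_affineSpan {s : Set V} {t : K} (hs : ∀ x ∈ s, ℓ x = t) {y : V}
    (hy : y ∈ affineSpan K s) : ℓ y = t := by
  refine affineSpan_induction hy hs fun c a b z ha hb hz => ?_
  simp [ha, hb, hz]

theorem LinearMap.mem_of_mem_affineSpan_insert {Λ : AffineSubspace K V} {t : K}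
    (hΛ : ∀ x ∈ Λ, ℓ x = t) {b y : V} (hb : ℓ b ≠ t)
    (hy : y ∈ affineSpan K (insert b (Λ : Set V))) (hyt : ℓ y = t) : y ∈ Λ := by
  rcases (Λ : Set V).eq_empty_or_nonempty with hΛe | ⟨p₀, hp₀⟩
  · rw [hΛe, insert_empty_eq, AffineSubspace.mem_affineSpan_singleton] at hy
    exact absurd (hy ▸ hyt) hb
  obtain ⟨r, z, hz, rfl⟩ := (AffineSubspace.mem_affineSpan_insert_iff hp₀ b y).1 hy
  have hr : r * (ℓ b - t) = 0 := by
    simpa [hΛ z hz, hΛ p₀ hp₀] using hyt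
  rcases mul_eq_zero.1 hr with rfl | hbt
  · simpa using hz
  · exact absurd (sub_eq_zero.1 hbt) hb

theorem LinearMap.notMem_affineSpan_insert {Λ : AffineSubspace K V} {t : K}
    (hΛ : ∀ x ∈ Λ, ℓ x = t) {a b : V} (hab : ℓ a ≠ ℓ b) (hb : ℓ b ≠ t)
    (hline : (affineSpan K {a, b} : Set V) ∩ Λ = ∅) :
    a ∉ affineSpan K (insert b (Λ : Set V)) := by
  intro ha
  set y := lineMap a b ((t - ℓ a) / (ℓ b - ℓ a))
  have hyt : ℓ y = t := by
    have : ℓ b - ℓ a ≠ 0 := sub_ne_zero.2 hab.symm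
    simp [y, lineMap_apply_module']
    field_simp
    ring
  have hyΛ := ℓ.mem_of_mem_affineSpan_insert hΛ hb
    (lineMap_mem _ ha (mem_affineSpan K (Set.mem_insert b _))) hyt
  exact (Set.eq_empty_iff_forall_notMem.1 hline) y ⟨lineMap_mem_affineSpan_pair _ _ _, hyΛ⟩

end AffineSeparation

theorem LinearMap.mem_affineSpan_image {K L V W : Type*} [Field K] [Field L] [Algebra K L]
    [AddCommGroup V] [Module K V] [AddCommGroup W] [Module K W] [Module L W]
    [IsScalarTower K L W] (f : V →ₗ[K] W) {s : Set V} {x : V} (hx : x ∈ affineSpan K s) :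
    f x ∈ affineSpan L (f '' s) := by
  refine affineSpan_induction hx (fun y hy => subset_affineSpan L _ ⟨y, hy, rfl⟩)
    fun c a b z ha hb hz => ?_
  have : f (c • (a -ᵥ b) +ᵥ z) = algebraMap K L c • (f a -ᵥ f b) +ᵥ f z := by
    simp [algebraMap_smul]
  exact this ▸ AffineSubspace.smul_vsub_vadd_mem _ _ ha hb hz

theorem exists_affine_mvPolynomial_of_notMem_affineSpan {σ K : Type*} [Fintype σ] [Field K]
    {s : Set (σ → K)} {a : σ → K} (ha : a ∉ affineSpan K s) {b : σ → K} (hb : b ∈ s) (t : K) :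
    ∃ G : MvPolynomial σ K, G.totalDegree ≤ 1 ∧ (∀ y ∈ s, eval y G = 0) ∧ eval a G = t := by
  classical
  have hbW : b ∈ affineSpan K s := subset_affineSpan K s hb
  obtain ⟨f, hfa, hfW⟩ := (affineSpan K s).direction.exists_dual_map_eq_bot_of_notMem
    (x := a -ᵥ b) (fun h => ha (by simpa using AffineSubspace.vadd_mem_of_mem_direction h hbW))
    inferInstance
  have hf (y : σ → K) : eval y (∑ i, C (f (Pi.single i 1)) * X i) = f y := by
    conv_rhs => rw [pi_eq_sum_univ' y, map_sum]
    simp [mul_comm]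
  refine ⟨C (t / f (a -ᵥ b)) * (∑ i, C (f (Pi.single i 1)) * X i - C (f b)), ?_,
    fun y hy => ?_, ?_⟩
  · refine (totalDegree_mul _ _).trans ?_
    rw [totalDegree_C, zero_add]
    exact (totalDegree_sub_C_le _ _).trans (IsHomogeneous.sum _ _ _ fun i _ =>
      isHomogeneous_C_mul_X _ i).totalDegree_le
  · have hfy : f (y -ᵥ b) ∈ (affineSpan K s).direction.map f := Submodule.mem_map_of_mem
      (AffineSubspace.vsub_mem_direction (subset_affineSpan K s hy) hbW)
    rw [hfW, Submodule.mem_bot, vsub_eq_sub, map_sub, sub_eq_zero] at hfy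
    simp [hf, hfy]
  · simp only [vsub_eq_sub, map_sub] at hfa ⊢
    simp [hf, hfa]
section ConvexHull

variable {𝕜 E : Type*} [Field 𝕜] [LinearOrder 𝕜] [IsStrictOrderedRing 𝕜] [AddCommGroup E]
  [Module 𝕜 E] (ℓ : E →ₗ[𝕜] 𝕜) {s : Set E}

theorem LinearMap.exists_isLeast_image_convexHull (hs : s.Finite) (hne : s.Nonempty) :
    ∃ q ∈ s, IsLeast (ℓ '' convexHull 𝕜 s) (ℓ q) := by
  obtain ⟨q, hq, hmin⟩ := s.exists_min_image ℓ hs hne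
  refine ⟨q, hq, ⟨q, subset_convexHull 𝕜 s hq, rfl⟩, ?_⟩
  rintro _ ⟨x, hx, rfl⟩
  obtain ⟨y, hy, hyx⟩ :=
    (ℓ.concaveOn convex_univ).exists_le_of_mem_convexHull (Set.subset_univ s) hx
  exact (hmin y hy).trans hyx

theorem LinearMap.exists_isGreatest_image_convexHull (hs : s.Finite) (hne : s.Nonempty) :
    ∃ q ∈ s, IsGreatest (ℓ '' convexHull 𝕜 s) (ℓ q) := by
  obtain ⟨q, hq, hmax⟩ := s.exists_max_image ℓ hs hne
  refine ⟨q, hq, ⟨q, subset_convexHull 𝕜 s hq, rfl⟩, ?_⟩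
  rintro _ ⟨x, hx, rfl⟩
  obtain ⟨y, hy, hxy⟩ :=
    (ℓ.convexOn convex_univ).exists_ge_of_mem_convexHull (Set.subset_univ s) hx
  exact hxy.trans (hmax y hy)

end ConvexHull

theorem ne_zero_of_gcd_eq_one {ι α : Type*} [CommMonoidWithZero α] [NormalizedGCDMonoid α]
    [Nontrivial α] {s : Finset ι} {f : ι → α} (h : s.gcd f = 1) : f ≠ 0 := by
  rintro rfl
  exact one_ne_zero (h.symm.trans (Finset.gcd_eq_zero_iff.2 fun _ _ => rfl))

section LatticePolytope

variable {k : ℕ} {V : Finset (Fin k → ℤ)} {Δ : Set (Fin k → ℝ)} {v : Fin k → ℤ}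

def castQ (p : Fin k → ℤ) : Fin k → ℚ := fun i => (p i : ℚ)

noncomputable def ratToReal : (Fin k → ℚ) →ₗ[ℚ] (Fin k → ℝ) :=
  (Algebra.linearMap ℚ ℝ).compLeft (Fin k)

theorem ratToReal_castQ (p : Fin k → ℤ) : ratToReal (castQ p) = castR p := by
  funext i
  simp [ratToReal, castQ, castR]

theorem castR_injective : Function.Injective (castR (k := k)) :=
  fun _ _ h => funext fun i => Int.cast_injective (congrFun h i)

def dotForm (v : Fin k → ℤ) : (Fin k → ℝ) →ₗ[ℝ] ℝ := Fintype.linearCombination ℝ (castR v)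

theorem dotForm_apply (v : Fin k → ℤ) (x : Fin k → ℝ) :
    dotForm v x = ∑ i, x i * (v i : ℝ) := rfl

theorem dotForm_castR (v p : Fin k → ℤ) : dotForm v (castR p) = ((p ⬝ᵥ v : ℤ) : ℝ) := by
  simp [dotForm_apply, castR, dotProduct]

theorem nonempty_of_affineSpan_eq_top (hΔ : Δ = convexHull ℝ (castR '' ↑V))
    (hfull : affineSpan ℝ Δ = ⊤) : V.Nonempty := by
  obtain ⟨x, hx⟩ := AffineSubspace.nonempty_of_affineSpan_eq_top ℝ _ _ hfull
  rw [hΔ] at hx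
  by_contra hV
  simp [Finset.not_nonempty_iff_eq_empty.1 hV] at hx

theorem exists_castR_eq_isLeast_of_minFace (hΔ : Δ = convexHull ℝ (castR '' ↑V))
    (hV : V.Nonempty) {pmin : Fin k → ℝ}
    (hmin : {x ∈ Δ | ∑ i, x i * (v i : ℝ) = minv k Δ v} = {pmin}) :
    ∃ q : Fin k → ℤ, pmin = castR q ∧ IsLeast (dotForm v '' Δ) (q ⬝ᵥ v : ℤ) := by
  obtain ⟨_, ⟨q, hq, rfl⟩, hleast⟩ := (dotForm v).exists_isLeast_image_convexHull
    (V.finite_toSet.image castR) (hV.to_set.image castR)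
  rw [← hΔ, dotForm_castR] at hleast
  refine ⟨q, (Set.eq_of_mem_singleton (hmin ▸ ⟨?_, ?_⟩)).symm, hleast⟩
  · exact hΔ ▸ subset_convexHull ℝ _ ⟨q, hq, rfl⟩
  · exact (dotForm_castR v q).trans hleast.csInf_eq.symm

theorem exists_castR_eq_isGreatest_of_maxFace (hΔ : Δ = convexHull ℝ (castR '' ↑V))
    (hV : V.Nonempty) {pmax : Fin k → ℝ}
    (hmax : {x ∈ Δ | ∑ i, x i * (v i : ℝ) = maxv k Δ v} = {pmax}) :
    ∃ q : Fin k → ℤ, pmax = castR q ∧ IsGreatest (dotForm v '' Δ) (q ⬝ᵥ v : ℤ) := by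
  obtain ⟨_, ⟨q, hq, rfl⟩, hgreatest⟩ := (dotForm v).exists_isGreatest_image_convexHull
    (V.finite_toSet.image castR) (hV.to_set.image castR)
  rw [← hΔ, dotForm_castR] at hgreatest
  refine ⟨q, (Set.eq_of_mem_singleton (hmax ▸ ⟨?_, ?_⟩)).symm, hgreatest⟩
  · exact hΔ ▸ subset_convexHull ℝ _ ⟨q, hq, rfl⟩
  · exact (dotForm_castR v q).trans hgreatest.csSup_eq.symm

theorem dotProduct_mem_Icc {a b : ℤ} (ha : IsLeast (dotForm v '' Δ) a)
    (hb : IsGreatest (dotForm v '' Δ) b) {p : Fin k → ℤ} (hp : castR p ∈ Δ) :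
    a ≤ p ⬝ᵥ v ∧ p ⬝ᵥ v ≤ b := by
  have h₁ := ha.2 ⟨_, hp, rfl⟩
  have h₂ := hb.2 ⟨_, hp, rfl⟩
  rw [dotForm_castR] at h₁ h₂
  exact ⟨mod_cast h₁, mod_cast h₂⟩

theorem dotProduct_ne_add_one_of_inter_Lambda_eq_empty {qmin qmax : Fin k → ℤ}
    (hqmax : castR qmax ∈ Δ) (hminv : minv k Δ v = (qmin ⬝ᵥ v : ℤ))
    (hline : (affineSpan ℝ {castR qmin, castR qmax} : Set (Fin k → ℝ)) ∩
      (Lambda k Δ v : Set (Fin k → ℝ)) = ∅) :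
    qmax ⬝ᵥ v ≠ qmin ⬝ᵥ v + 1 := fun h =>
  Set.eq_empty_iff_forall_notMem.1 hline _ ⟨right_mem_affineSpan_pair ℝ _ _,
    subset_affineSpan ℝ _ ⟨qmax, ⟨hqmax, (dotForm_castR v qmax).trans
      (by rw [hminv, h]; push_cast; ring)⟩, rfl⟩⟩

theorem eq_of_dotProduct_eq_of_face_eq_singleton {t : ℝ} {q p : Fin k → ℤ}
    (hface : {x ∈ Δ | ∑ i, x i * (v i : ℝ) = t} = {castR q}) (hp : castR p ∈ Δ)
    (hpq : p ⬝ᵥ v = q ⬝ᵥ v) : p = q := by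
  have hq : castR q ∈ {x ∈ Δ | ∑ i, x i * (v i : ℝ) = t} := hface ▸ rfl
  refine castR_injective (Set.eq_of_mem_singleton (hface ▸ ⟨hp, ?_⟩))
  rw [← hq.2]
  simp only [← dotForm_apply, dotForm_castR, hpq]

theorem lt_of_minFace_eq_singleton (hv : v ≠ 0) (hfull : affineSpan ℝ Δ = ⊤) {a b : ℝ}
    (ha : IsLeast (dotForm v '' Δ) a) (hb : IsGreatest (dotForm v '' Δ) b) {p₀ : Fin k → ℝ}
    (hface : {x ∈ Δ | ∑ i, x i * (v i : ℝ) = minv k Δ v} = {p₀}) : a < b := by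
  refine lt_of_le_of_ne (ha.2 hb.1) fun hab => hv ?_
  have hsub : Δ ⊆ {p₀} := by
    intro x hx
    have hax := ha.2 ⟨x, hx, rfl⟩
    have hxb := hb.2 ⟨x, hx, rfl⟩
    refine hface ▸ ⟨hx, ?_⟩
    change dotForm v x = sInf (dotForm v '' Δ)
    rw [ha.csInf_eq]
    linarith
  have := AffineSubspace.subsingleton_of_subsingleton_span_eq_top
    (Set.subsingleton_singleton.anti hsub) hfull
  exact funext fun i => by simpa [castR] using congrFun (Subsingleton.elim (castR v) 0) i

theorem castQ_notMem_affineSpan_insert {qmin qmax : Fin k → ℤ} {m : ℕ} (hm : 2 ≤ m)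
    (hminv : minv k Δ v = (qmin ⬝ᵥ v : ℤ)) (hwidth : qmax ⬝ᵥ v = qmin ⬝ᵥ v + m)
    (hline : (affineSpan ℝ {castR qmin, castR qmax} : Set (Fin k → ℝ)) ∩
      (Lambda k Δ v : Set (Fin k → ℝ)) = ∅) :
    castQ qmin ∉ affineSpan ℚ (insert (castQ qmax) (castQ '' {p : Fin k → ℤ |
      castR p ∈ Δ ∧ ∑ i, (p i : ℝ) * (v i : ℝ) = minv k Δ v + 1})) := by
  intro h
  have hR := ratToReal.mem_affineSpan_image (L := ℝ) h
  simp only [Set.image_insert_eq, Set.image_image, ratToReal_castQ] at hR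
  have hΛ (x) (hx : x ∈ Lambda k Δ v) : dotForm v x = minv k Δ v + 1 :=
    (dotForm v).eq_of_mem_affineSpan (by rintro _ ⟨p, hp, rfl⟩; exact hp.2) hx
  refine (dotForm v).notMem_affineSpan_insert hΛ ?_ ?_ hline
    (affineSpan_mono ℝ (Set.insert_subset_insert (subset_affineSpan ℝ _)) hR)
  · rw [dotForm_castR, dotForm_castR, Ne, Int.cast_inj, hwidth]
    omega
  · rw [dotForm_castR, hminv, Ne, ← Int.cast_one, ← Int.cast_add, Int.cast_inj, hwidth]
    omega

theorem exists_mvPolynomial_vanishing_of_levels {S : Set (Fin k → ℤ)} (hv : v ≠ 0) {n : ℤ}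
    {m : ℕ} (hm : 2 ≤ m) {G : MvPolynomial (Fin k) ℚ} (hG : G.totalDegree ≤ 1)
    (hS : ∀ p ∈ S, n ≤ p ⬝ᵥ v ∧ p ⬝ᵥ v ≤ n + m)
    (h₀ : ∀ p ∈ S, p ⬝ᵥ v = n → eval (castQ p) G = -m)
    (h₁ : ∀ p ∈ S, p ⬝ᵥ v = n + 1 → eval (castQ p) G = 0)
    (h_top : ∀ p ∈ S, p ⬝ᵥ v = n + m → eval (castQ p) G = 0) :
    ∃ F : MvPolynomial (Fin k) ℚ, F.totalDegree = m ∧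
      homogeneousComponent m F = (∑ i, C (v i : ℚ) * X i) ^ m ∧
      ∀ p ∈ S, eval (castQ p) F = 0 := by
  set w : MvPolynomial (Fin k) ℚ := ∑ i, C (v i : ℚ) * X i
  have hw : w.IsHomogeneous 1 := IsHomogeneous.sum _ _ _ fun i _ => isHomogeneous_C_mul_X _ i
  have hu : (w - C (n : ℚ)).totalDegree ≤ 1 := (totalDegree_sub_C_le _ _).trans hw.totalDegree_le
  have hF : homogeneousComponent m (widthPoly m (w - C (n : ℚ)) G) = w ^ m := by
    rw [homogeneousComponent_widthPoly hm hu hG, map_sub, homogeneousComponent_eq_self hw,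
      homogeneousComponent_eq_zero 1 (C _) (by rw [totalDegree_C]; omega), sub_zero]
  have hw0 : w ≠ 0 := sum_C_mul_X_ne_zero fun h => hv (funext fun i => by simpa using congrFun h i)
  refine ⟨widthPoly m (w - C (n : ℚ)) G, totalDegree_eq_of_homogeneousComponent_ne_zero
    (totalDegree_widthPoly_le hm hu hG) (hF ▸ pow_ne_zero m hw0), hF, fun p hp => ?_⟩
  obtain ⟨L, hL⟩ := Int.eq_ofNat_of_zero_le (sub_nonneg.2 (hS p hp).1)
  have hu_eval : eval (castQ p) (w - C (n : ℚ)) = L := by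
    have : ((p ⬝ᵥ v : ℤ) : ℚ) = n + L := by exact_mod_cast (by omega : p ⬝ᵥ v = n + L)
    simp [w, castQ, dotProduct, mul_comm] at this ⊢
    linarith
  rw [map_widthPoly, hu_eval]
  exact widthPoly_natCast_eq_zero (by have := (hS p hp).2; omega)
    (fun h => h₀ p hp (by omega)) (fun h => h₁ p hp (by omega)) (fun h => h_top p hp (by omega))

end LatticePolytope

theorem exists_hypersurface_of_width_conditions_general (k : ℕ)
    (V : Finset (Fin k → ℤ)) (Δ : Set (Fin k → ℝ))
    (hΔ : Δ = convexHull ℝ (castR '' (V : Set (Fin k → ℤ))))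
    (hfull : affineSpan ℝ Δ = ⊤)
    (v : Fin k → ℤ) (hprim : Finset.univ.gcd v = 1)
    (m : ℕ) (hm : (m : ℝ) = lwv k Δ v)
    (pmin pmax : Fin k → ℝ)
    (hmin : {x ∈ Δ | ∑ i, x i * (v i : ℝ) = minv k Δ v} = {pmin})
    (hmax : {x ∈ Δ | ∑ i, x i * (v i : ℝ) = maxv k Δ v} = {pmax})
    (hline : (affineSpan ℝ {pmin, pmax} : Set (Fin k → ℝ)) ∩
      (Lambda k Δ v : Set (Fin k → ℝ)) = ∅) :
    ∃ F : MvPolynomial (Fin k) ℚ, F.totalDegree = m ∧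
      MvPolynomial.homogeneousComponent m F =
        (∑ i, MvPolynomial.C (v i : ℚ) * MvPolynomial.X i) ^ m ∧
      ∀ p : Fin k → ℤ, castR p ∈ Δ →
        MvPolynomial.eval (fun i => (p i : ℚ)) F = 0 := by
  have hv : v ≠ 0 := ne_zero_of_gcd_eq_one hprim
  have hV := nonempty_of_affineSpan_eq_top hΔ hfull
  obtain ⟨qmin, rfl, hleast⟩ := exists_castR_eq_isLeast_of_minFace hΔ hV hmin
  obtain ⟨qmax, rfl, hgreatest⟩ := exists_castR_eq_isGreatest_of_maxFace hΔ hV hmax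
  have hminv : minv k Δ v = (qmin ⬝ᵥ v : ℤ) := hleast.csInf_eq
  have hwidth : qmax ⬝ᵥ v = qmin ⬝ᵥ v + m := by
    have : ((qmax ⬝ᵥ v : ℤ) : ℝ) = (qmin ⬝ᵥ v : ℤ) + m := by
      rw [hm, lwv, hminv, show maxv k Δ v = _ from hgreatest.csSup_eq]; ring
    exact_mod_cast this
  have hm2 : 2 ≤ m := by
    have hpos := lt_of_minFace_eq_singleton hv hfull hleast hgreatest hmin
    have hne := dotProduct_ne_add_one_of_inter_Lambda_eq_empty
      (hmax.ge (Set.mem_singleton _)).1 hminv hline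
    rw [hwidth, Int.cast_lt] at hpos
    omega
  obtain ⟨G, hG, hG0, hGmin⟩ := exists_affine_mvPolynomial_of_notMem_affineSpan
    (castQ_notMem_affineSpan_insert hm2 hminv hwidth hline) (Set.mem_insert _ _) (-m)
  refine exists_mvPolynomial_vanishing_of_levels (S := {p | castR p ∈ Δ}) (n := qmin ⬝ᵥ v) hv
    hm2 hG (fun p hp => ?_) (fun p hp hpv => ?_) (fun p hp hpv => ?_) (fun p hp hpv => ?_)
  · exact hwidth ▸ dotProduct_mem_Icc hleast hgreatest hp
  · rw [eq_of_dotProduct_eq_of_face_eq_singleton hmin hp hpv, hGmin]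
  · refine hG0 _ (Set.mem_insert_of_mem _ ⟨p, ⟨hp, ?_⟩, rfl⟩)
    refine (dotForm_castR v p).trans ?_
    rw [hminv, hpv]
    push_cast
    ring
  · rw [eq_of_dotProduct_eq_of_face_eq_singleton hmax hp (hpv.trans hwidth.symm)]
    exact hG0 _ (Set.mem_insert _ _)

/-- **Corollary (non-semiampleness criterion).** Under hypotheses (1)–(3) on the primitive
width direction `v`, all the lattice points of `Δ` lie on an affine hypersurface of degree
`m = lw(Δ)` with leading form `⟨x,v⟩^m`. -/
theorem exists_hypersurface_of_width_conditions (k : ℕ) (hk : 2 ≤ k)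
    (V : Finset (Fin k → ℤ)) (Δ : Set (Fin k → ℝ))
    (hΔ : Δ = convexHull ℝ (castR '' (V : Set (Fin k → ℤ))))
    (hfull : affineSpan ℝ Δ = ⊤)
    (v : Fin k → ℤ) (hprim : Finset.univ.gcd v = 1)
    (m : ℕ) (hm : (m : ℝ) = lwv k Δ v) (hlw : lw k Δ = lwv k Δ v)
    (pmin pmax : Fin k → ℝ)
    (hmin : {x ∈ Δ | ∑ i, x i * (v i : ℝ) = minv k Δ v} = {pmin})
    (hmax : {x ∈ Δ | ∑ i, x i * (v i : ℝ) = maxv k Δ v} = {pmax})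
    (hdim : Module.finrank ℝ (Lambda k Δ v).direction ≤ k - 2)
    (hline : (affineSpan ℝ {pmin, pmax} : Set (Fin k → ℝ)) ∩
      (Lambda k Δ v : Set (Fin k → ℝ)) = ∅) :
    ∃ F : MvPolynomial (Fin k) ℚ, F.totalDegree = m ∧
      MvPolynomial.homogeneousComponent m F =
        (∑ i, MvPolynomial.C (v i : ℚ) * MvPolynomial.X i) ^ m ∧
      ∀ p : Fin k → ℤ, castR p ∈ Δ →
        MvPolynomial.eval (fun i => (p i : ℚ)) F = 0 :=
  exists_hypersurface_of_width_conditions_general k V Δ hΔ hfull v hprim m hm pmin pmax hmin hmax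
    hline
end

section
/- Let k ≥ 2 and let Δ ⊂ ℝ^k be a full-dimensional lattice polytope, and let v ∈ ℤ^k be a primitive vector with lw(Δ) = lw_v(Δ), satisfying: (1) the hyperplane {⟨x,v⟩ = min(Δ,v)} intersects Δ exactly in one vertex p_min, and the hyperplane {⟨x,v⟩ = max(Δ,v)} intersects Δ exactly in one vertex p_max; (2) the affine span Λ of the set of lattice points of Δ lying on {⟨x,v⟩ = min(Δ,v)+1} has dimension ≤ k−2; (3) the line through p_min and p_max does not intersect Λ. Then for every positive integer r the dilated polytope rΔ satisfies lw(rΔ) = lw_v(rΔ) = r·lw(Δ) and the same three conditions (1),(2),(3) hold for rΔ with respect to the same vector v. -/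
open MvPolynomial

/-- The dilation `rΔ = {r·x : x ∈ Δ}`. -/
def dil (k : ℕ) (r : ℕ) (Δ : Set (Fin k → ℝ)) : Set (Fin k → ℝ) :=
  (fun x : Fin k → ℝ => (r : ℝ) • x) '' Δ

/-!
Dilation by `r` scales every level `⟨x, v⟩`, hence `min`, `max` and every directional width, by
`r`, and it maps the extremal faces `{pmin}`, `{pmax}` to `{r • pmin}`, `{r • pmax}`. The real
point is `Λ`. As `pmin` is the unique lowest vertex and a lattice point, every other vertex has
level at least `min + 1`; so a point of `Δ` at level `min + t` (`t > 0`) is `(1 - t) • pmin + t • z`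
with `z ∈ Δ` at level `min + 1`. For `t = 1 / r` this identifies the slice of `rΔ` at level
`r * min + 1` with the translate by the lattice vector `(r - 1) • pmin` of the slice of `Δ` at
level `min + 1`. Hence `Λ(rΔ) = (r - 1) • pmin +ᵥ Λ(Δ)`, which has the same direction and misses
the line through `r • pmin` and `r • pmax`, a subset of `(r - 1) • pmin +ᵥ line[pmin, pmax]`.
-/

open Pointwise

section RealVectorSpace

variable {E : Type*} [AddCommGroup E] [Module ℝ E]

theorem exists_isLeast_image_convexHull {S : Set E} (hS : S.Finite) (hne : S.Nonempty)
    (f : E →ₗ[ℝ] ℝ) : ∃ s ∈ S, IsLeast (f '' convexHull ℝ S) (f s) := by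
  obtain ⟨s, hs, hmin⟩ := S.exists_min_image f hS hne
  refine ⟨s, hs, Set.mem_image_of_mem _ (subset_convexHull ℝ S hs), ?_⟩
  rintro _ ⟨x, hx, rfl⟩
  exact convexHull_min (fun y hy => hmin y hy) (convex_halfSpace_ge f.isLinear (f s)) hx

theorem exists_eq_convex_comb_level_add_one (f : E →ₗ[ℝ] ℝ) {p x : E} {S : Set E}
    {m t : ℝ} (hp : f p = m) (hS : ∀ s ∈ S, m + 1 ≤ f s)
    (hx : x ∈ convexHull ℝ (insert p S)) (hfx : f x = m + t) (ht : 0 < t) :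
    ∃ z ∈ convexHull ℝ (insert p S), f z = m + 1 ∧ x = (1 - t) • p + t • z := by
  rcases S.eq_empty_or_nonempty with rfl | hSne
  · rw [insert_empty_eq, convexHull_singleton, Set.mem_singleton_iff] at hx
    subst hx
    linarith
  rw [convexHull_insert hSne, mem_convexJoin] at hx
  obtain ⟨q, hq, y, hy, a, b, ha, hb, hab, rfl⟩ := hx
  rw [Set.mem_singleton_iff] at hq
  subst q
  have hfy : m + 1 ≤ f y :=
    convexHull_min hS (convex_halfSpace_ge f.isLinear (m + 1)) hy
  -- `z` is the point of the segment `[p, y]` at level `m + 1`.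
  set d := f y - m
  have hd : 0 < d := by linarith
  have hbd : b * d = t := by
    rw [map_add, map_smul, map_smul, hp, smul_eq_mul, smul_eq_mul] at hfx
    linear_combination hfx - m * hab
  have hp_mem : p ∈ convexHull ℝ (insert p S) := subset_convexHull ℝ _ (Set.mem_insert p S)
  have hy_mem : y ∈ convexHull ℝ (insert p S) := convexHull_mono (Set.subset_insert p S) hy
  refine ⟨(1 - d⁻¹) • p + d⁻¹ • y, convex_convexHull ℝ _ hp_mem hy_mem ?_ ?_ (by ring), ?_, ?_⟩
  · rw [sub_nonneg]
    exact inv_le_one_of_one_le₀ (by linarith)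
  · positivity
  · rw [map_add, map_smul, map_smul, hp, smul_eq_mul, smul_eq_mul]
    field_simp
    ring
  · have hdd : b * d * d⁻¹ = b := by field_simp
    rw [← hbd]
    calc a • p + b • y = (1 - b * d + b * d * (1 - d⁻¹)) • p + (b * d * d⁻¹) • y := by
          rw [hdd, show 1 - b * d + b * d * (1 - d⁻¹) = a by linear_combination -hdd - hab]
      _ = (1 - b * d) • p + (b * d) • ((1 - d⁻¹) • p + d⁻¹ • y) := by module

theorem smul_convexHull_insert_sep_eq_vadd (f : E →ₗ[ℝ] ℝ) {p : E} {S : Set E} {m r : ℝ}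
    (hp : f p = m) (hS : ∀ s ∈ S, m + 1 ≤ f s) (hr : 1 ≤ r) :
    {x ∈ r • convexHull ℝ (insert p S) | f x = r * m + 1} =
      ((r - 1) • p) +ᵥ {x ∈ convexHull ℝ (insert p S) | f x = m + 1} := by
  have hr0 : r ≠ 0 := by positivity
  have hrp (z : E) : r • ((1 - r⁻¹) • p + r⁻¹ • z) = (r - 1) • p + z := by
    rw [smul_add, smul_smul, smul_smul, mul_sub, mul_one, mul_inv_cancel₀ hr0, one_smul]
  ext x
  simp only [Set.mem_sep_iff, Set.mem_smul_set, Set.mem_vadd_set, vadd_eq_add]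
  constructor
  · rintro ⟨⟨y, hy, rfl⟩, hfx⟩
    have hfy : f y = m + r⁻¹ := by
      rw [map_smul, smul_eq_mul] at hfx
      field_simp
      linarith
    obtain ⟨z, hz, hfz, rfl⟩ :=
      exists_eq_convex_comb_level_add_one f hp hS hy hfy (by positivity)
    exact ⟨z, ⟨hz, hfz⟩, (hrp z).symm⟩
  · rintro ⟨z, ⟨hz, hfz⟩, rfl⟩
    have hp_mem : p ∈ convexHull ℝ (insert p S) := subset_convexHull ℝ _ (Set.mem_insert p S)
    refine ⟨⟨_, convex_convexHull ℝ _ hp_mem hz ?_ (by positivity) (by ring), hrp z⟩, ?_⟩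
    · rw [sub_nonneg]
      exact inv_le_one_of_one_le₀ hr
    · rw [map_add, map_smul, hp, hfz, smul_eq_mul]
      ring

theorem affineSpan_pair_smul_inter_vadd_eq_empty {a b : E} {L : AffineSubspace ℝ E} (r : ℝ)
    (h : (line[ℝ, a, b] : Set E) ∩ L = ∅) :
    (line[ℝ, r • a, r • b] : Set E) ∩ ((r - 1) • a +ᵥ L : AffineSubspace ℝ E) = ∅ := by
  have hle : line[ℝ, r • a, r • b] ≤ (r - 1) • a +ᵥ line[ℝ, a, b] := by
    refine affineSpan_pair_le_of_mem_of_mem ?_ ?_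
    · convert AffineSubspace.vadd_mem_pointwise_vadd_iff.2 (left_mem_affineSpan_pair ℝ a b) using 1
      rw [vadd_eq_add]
      module
    · convert AffineSubspace.vadd_mem_pointwise_vadd_iff.2
        (AffineMap.lineMap_mem_affineSpan_pair r a b) using 1
      rw [vadd_eq_add, AffineMap.lineMap_apply_module]
      module
  rw [← Set.subset_empty_iff, ← Set.vadd_set_empty (a := (r - 1) • a), ← h, Set.vadd_set_inter,
    AffineSubspace.coe_pointwise_vadd, ← AffineSubspace.coe_pointwise_vadd]
  exact Set.inter_subset_inter_left _ hle

end RealVectorSpace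

noncomputable def levelForm {k : ℕ} (v : Fin k → ℤ) : (Fin k → ℝ) →ₗ[ℝ] ℝ where
  toFun x := ∑ i, x i * (v i : ℝ)
  map_add' x y := by simp only [Pi.add_apply, add_mul, Finset.sum_add_distrib]
  map_smul' c x := by simp only [Pi.smul_apply, smul_eq_mul, Finset.mul_sum, mul_assoc,
    RingHom.id_apply]

section Polytope

variable {k : ℕ}

theorem levelForm_castR (v p : Fin k → ℤ) :
    levelForm v (castR p) = ((∑ i, p i * v i : ℤ) : ℝ) := by
  push_cast
  rfl

theorem castR_add (p q : Fin k → ℤ) : castR (p + q) = castR p + castR q := by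
  ext i
  simp [castR]

theorem castR_zsmul (n : ℤ) (p : Fin k → ℤ) : castR (n • p) = (n : ℝ) • castR p := by
  ext i
  simp [castR]

theorem image_castR_preimage_vadd (q : Fin k → ℤ) (A : Set (Fin k → ℝ)) :
    castR '' (castR ⁻¹' (castR q +ᵥ A)) = castR q +ᵥ castR '' (castR ⁻¹' A) := by
  ext x
  simp only [Set.mem_image, Set.mem_preimage, Set.mem_vadd_set, vadd_eq_add]
  constructor
  · rintro ⟨p, ⟨y, hy, hqy⟩, rfl⟩
    have hy' : y = castR (p - q) := by
      rw [← add_right_inj (castR q), hqy, ← castR_add, add_sub_cancel]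
    exact ⟨y, ⟨p - q, hy' ▸ hy, hy'.symm⟩, hqy⟩
  · rintro ⟨_, ⟨p, hp, rfl⟩, rfl⟩
    exact ⟨q + p, ⟨castR p, hp, (castR_add q p).symm⟩, castR_add q p⟩

theorem dil_eq_smul (r : ℕ) (Δ : Set (Fin k → ℝ)) : dil k r Δ = (r : ℝ) • Δ :=
  Set.image_smul

theorem image_levelForm_dil (r : ℕ) (Δ : Set (Fin k → ℝ)) (v : Fin k → ℤ) :
    levelForm v '' dil k r Δ = (r : ℝ) • (levelForm v '' Δ) := by
  rw [dil_eq_smul, image_smul_set]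

theorem minv_dil (r : ℕ) (Δ : Set (Fin k → ℝ)) (v : Fin k → ℤ) :
    minv k (dil k r Δ) v = r * minv k Δ v := by
  rw [minv, minv, ← smul_eq_mul, ← Real.sInf_smul_of_nonneg r.cast_nonneg]
  exact congrArg sInf (image_levelForm_dil r Δ v)

theorem maxv_dil (r : ℕ) (Δ : Set (Fin k → ℝ)) (v : Fin k → ℤ) :
    maxv k (dil k r Δ) v = r * maxv k Δ v := by
  rw [maxv, maxv, ← smul_eq_mul, ← Real.sSup_smul_of_nonneg r.cast_nonneg]
  exact congrArg sSup (image_levelForm_dil r Δ v)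

theorem lwv_dil (r : ℕ) (Δ : Set (Fin k → ℝ)) (v : Fin k → ℤ) :
    lwv k (dil k r Δ) v = r * lwv k Δ v := by
  rw [lwv, lwv, minv_dil, maxv_dil, mul_sub]

theorem lw_dil (r : ℕ) (Δ : Set (Fin k → ℝ)) : lw k (dil k r Δ) = r * lw k Δ := by
  rw [lw, lw, ← smul_eq_mul, ← Real.sInf_smul_of_nonneg r.cast_nonneg]
  congr 1
  ext w
  simp only [Set.mem_smul_set, Set.mem_ofPred_eq, lwv_dil, smul_eq_mul]
  constructor
  · rintro ⟨u, hu, rfl⟩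
    exact ⟨lwv k Δ u, ⟨u, hu, rfl⟩, rfl⟩
  · rintro ⟨_, ⟨u, hu, rfl⟩, rfl⟩
    exact ⟨u, hu, rfl⟩

theorem sep_levelForm_dil {r : ℕ} (hr : 0 < r) (Δ : Set (Fin k → ℝ)) (v : Fin k → ℤ) (c : ℝ) :
    {x ∈ dil k r Δ | levelForm v x = r * c} = (r : ℝ) • {x ∈ Δ | levelForm v x = c} := by
  have hr' : (r : ℝ) ≠ 0 := by positivity
  ext x
  rw [dil_eq_smul]
  simp only [Set.mem_sep_iff, Set.mem_smul_set]
  constructor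
  · rintro ⟨⟨y, hy, rfl⟩, hfy⟩
    rw [map_smul, smul_eq_mul, mul_right_inj' hr'] at hfy
    exact ⟨y, ⟨hy, hfy⟩, rfl⟩
  · rintro ⟨y, ⟨hy, rfl⟩, rfl⟩
    exact ⟨⟨y, hy, rfl⟩, by rw [map_smul, smul_eq_mul]⟩

theorem sep_minv_dil {r : ℕ} (hr : 0 < r) {Δ : Set (Fin k → ℝ)} {v : Fin k → ℤ}
    {p : Fin k → ℝ} (h : {x ∈ Δ | ∑ i, x i * (v i : ℝ) = minv k Δ v} = {p}) :
    {x ∈ dil k r Δ | ∑ i, x i * (v i : ℝ) = minv k (dil k r Δ) v} = {(r : ℝ) • p} := by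
  rw [minv_dil, ← Set.smul_set_singleton, ← h]
  exact sep_levelForm_dil hr Δ v _

theorem sep_maxv_dil {r : ℕ} (hr : 0 < r) {Δ : Set (Fin k → ℝ)} {v : Fin k → ℤ}
    {p : Fin k → ℝ} (h : {x ∈ Δ | ∑ i, x i * (v i : ℝ) = maxv k Δ v} = {p}) :
    {x ∈ dil k r Δ | ∑ i, x i * (v i : ℝ) = maxv k (dil k r Δ) v} = {(r : ℝ) • p} := by
  rw [maxv_dil, ← Set.smul_set_singleton, ← h]
  exact sep_levelForm_dil hr Δ v _

theorem exists_apex_of_sep_minv_eq_singleton {V : Finset (Fin k → ℤ)} {Δ : Set (Fin k → ℝ)}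
    {v : Fin k → ℤ} {pmin : Fin k → ℝ} (hΔ : Δ = convexHull ℝ (castR '' (V : Set (Fin k → ℤ))))
    (hmin : {x ∈ Δ | levelForm v x = minv k Δ v} = {pmin}) :
    ∃ p₀, castR p₀ = pmin ∧ ∃ S, Δ = convexHull ℝ (insert pmin S) ∧
      ∀ s ∈ S, minv k Δ v + 1 ≤ levelForm v s := by
  have hsep {x} (hx : x ∈ Δ) (hfx : levelForm v x = minv k Δ v) : x = pmin :=
    hmin.subset ⟨hx, hfx⟩
  have hV {p} (hp : p ∈ V) : castR p ∈ Δ :=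
    hΔ ▸ subset_convexHull ℝ _ (Set.mem_image_of_mem castR hp)
  have hne : (castR '' (V : Set (Fin k → ℤ))).Nonempty := by
    rw [← convexHull_nonempty_iff (𝕜 := ℝ), ← hΔ]
    exact ⟨pmin, (hmin.symm.subset rfl).1⟩
  obtain ⟨_, ⟨p₀, hp₀V, rfl⟩, hleast⟩ :=
    exists_isLeast_image_convexHull (V.finite_toSet.image castR) hne (levelForm v)
  rw [← hΔ] at hleast
  have hminv : minv k Δ v = levelForm v (castR p₀) := hleast.csInf_eq
  have hp₀ : castR p₀ = pmin := hsep (hV hp₀V) hminv.symm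
  refine ⟨p₀, hp₀, castR '' V \ {pmin}, ?_, ?_⟩
  · rw [Set.insert_sdiff_singleton, Set.insert_eq_of_mem (hp₀ ▸ Set.mem_image_of_mem castR hp₀V)]
    exact hΔ
  rintro _ ⟨⟨p, hpV, rfl⟩, hp⟩
  have hlt : minv k Δ v < levelForm v (castR p) :=
    (hminv ▸ hleast.2 (Set.mem_image_of_mem _ (hV hpV))).lt_of_ne
      fun h => hp (hsep (hV hpV) h.symm)
  rw [hminv, levelForm_castR, levelForm_castR] at hlt ⊢
  exact_mod_cast Int.add_one_le_of_lt (Int.cast_lt.1 hlt)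

theorem Lambda_eq_affineSpan (Δ : Set (Fin k → ℝ)) (v : Fin k → ℤ) :
    Lambda k Δ v =
      affineSpan ℝ (castR '' (castR ⁻¹' {x ∈ Δ | levelForm v x = minv k Δ v + 1})) :=
  rfl

theorem Lambda_dil {Δ : Set (Fin k → ℝ)} {v p₀ : Fin k → ℤ} {S : Set (Fin k → ℝ)}
    (hΔ : Δ = convexHull ℝ (insert (castR p₀) S))
    (hp₀ : levelForm v (castR p₀) = minv k Δ v) (hS : ∀ s ∈ S, minv k Δ v + 1 ≤ levelForm v s)
    {r : ℕ} (hr : 0 < r) :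
    Lambda k (dil k r Δ) v = ((r : ℝ) - 1) • castR p₀ +ᵥ Lambda k Δ v := by
  have hw : ((r : ℝ) - 1) • castR p₀ = castR (((r : ℤ) - 1) • p₀) := by
    rw [castR_zsmul]
    push_cast
    rfl
  rw [Lambda_eq_affineSpan, Lambda_eq_affineSpan, AffineSubspace.pointwise_vadd_span, minv_dil,
    hw, ← image_castR_preimage_vadd, ← hw, dil_eq_smul]
  subst hΔ
  congr 3
  exact smul_convexHull_insert_sep_eq_vadd _ hp₀ hS (by exact_mod_cast hr)

end Polytope

theorem width_conditions_dilate_general (k : ℕ)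
    (V : Finset (Fin k → ℤ)) (Δ : Set (Fin k → ℝ))
    (hΔ : Δ = convexHull ℝ (castR '' (V : Set (Fin k → ℤ))))
    (v : Fin k → ℤ)
    (hlw : lw k Δ = lwv k Δ v)
    (pmin pmax : Fin k → ℝ)
    (hmin : {x ∈ Δ | ∑ i, x i * (v i : ℝ) = minv k Δ v} = {pmin})
    (hmax : {x ∈ Δ | ∑ i, x i * (v i : ℝ) = maxv k Δ v} = {pmax})
    (hdim : Module.finrank ℝ (Lambda k Δ v).direction ≤ k - 2)
    (hline : (affineSpan ℝ {pmin, pmax} : Set (Fin k → ℝ)) ∩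
      (Lambda k Δ v : Set (Fin k → ℝ)) = ∅) :
    ∀ r : ℕ, 0 < r →
      lw k (dil k r Δ) = lwv k (dil k r Δ) v ∧
      lwv k (dil k r Δ) v = (r : ℝ) * lw k Δ ∧
      {x ∈ dil k r Δ | ∑ i, x i * (v i : ℝ) = minv k (dil k r Δ) v} = {(r : ℝ) • pmin} ∧
      {x ∈ dil k r Δ | ∑ i, x i * (v i : ℝ) = maxv k (dil k r Δ) v} = {(r : ℝ) • pmax} ∧
      Module.finrank ℝ (Lambda k (dil k r Δ) v).direction ≤ k - 2 ∧
      (affineSpan ℝ {(r : ℝ) • pmin, (r : ℝ) • pmax} : Set (Fin k → ℝ)) ∩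
        (Lambda k (dil k r Δ) v : Set (Fin k → ℝ)) = ∅ := by
  intro r hr
  obtain ⟨p₀, rfl, S, hΔS, hS⟩ := exists_apex_of_sep_minv_eq_singleton hΔ hmin
  have hΛ : Lambda k (dil k r Δ) v = ((r : ℝ) - 1) • castR p₀ +ᵥ Lambda k Δ v :=
    Lambda_dil hΔS (hmin.symm.subset rfl).2 hS hr
  refine ⟨by rw [lw_dil, lwv_dil, hlw], by rw [lwv_dil, hlw], sep_minv_dil hr hmin,
    sep_maxv_dil hr hmax, ?_, ?_⟩
  · rwa [hΛ, AffineSubspace.pointwise_vadd_direction]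
  · rw [hΛ]
    exact affineSpan_pair_smul_inter_vadd_eq_empty _ hline

/-- The hypotheses (1)–(3) of the non-semiampleness criterion are preserved by dilation:
for every `r ≥ 1`, the polytope `rΔ` satisfies `lw(rΔ) = lw_v(rΔ) = r·lw(Δ)` and the
conditions (1), (2) and (3) with respect to the same direction `v`. -/
theorem width_conditions_dilate (k : ℕ) (hk : 2 ≤ k)
    (V : Finset (Fin k → ℤ)) (Δ : Set (Fin k → ℝ))
    (hΔ : Δ = convexHull ℝ (castR '' (V : Set (Fin k → ℤ))))
    (hfull : affineSpan ℝ Δ = ⊤)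
    (v : Fin k → ℤ) (hprim : Finset.univ.gcd v = 1)
    (hlw : lw k Δ = lwv k Δ v)
    (pmin pmax : Fin k → ℝ)
    (hmin : {x ∈ Δ | ∑ i, x i * (v i : ℝ) = minv k Δ v} = {pmin})
    (hmax : {x ∈ Δ | ∑ i, x i * (v i : ℝ) = maxv k Δ v} = {pmax})
    (hdim : Module.finrank ℝ (Lambda k Δ v).direction ≤ k - 2)
    (hline : (affineSpan ℝ {pmin, pmax} : Set (Fin k → ℝ)) ∩
      (Lambda k Δ v : Set (Fin k → ℝ)) = ∅) :
    ∀ r : ℕ, 0 < r →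
      lw k (dil k r Δ) = lwv k (dil k r Δ) v ∧
      lwv k (dil k r Δ) v = (r : ℝ) * lw k Δ ∧
      {x ∈ dil k r Δ | ∑ i, x i * (v i : ℝ) = minv k (dil k r Δ) v} = {(r : ℝ) • pmin} ∧
      {x ∈ dil k r Δ | ∑ i, x i * (v i : ℝ) = maxv k (dil k r Δ) v} = {(r : ℝ) • pmax} ∧
      Module.finrank ℝ (Lambda k (dil k r Δ) v).direction ≤ k - 2 ∧
      (affineSpan ℝ {(r : ℝ) • pmin, (r : ℝ) • pmax} : Set (Fin k → ℝ)) ∩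
        (Lambda k (dil k r Δ) v : Set (Fin k → ℝ)) = ∅ :=
  width_conditions_dilate_general k V Δ hΔ v hlw pmin pmax hmin hmax hdim hline
end
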